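/- Let ℓ ≥ 2 be an integer. For every (E,L) with E > 0 and 0 < |L| < (2ℓE/(ℓ+1))^{(ℓ+1)/(2ℓ)} and every λ > 0, the pair (λ^{2ℓ/(ℓ+1)} E, λL) also satisfies these conditions, and a_r(λ^{2ℓ/(ℓ+1)} E, λL) = λ · a_r(E, L). -/

import Mathlib

/-
With `μ = λ^{1/(ℓ+1)}` the potential is homogeneous:
`V*_{μ^{ℓ+1} L}(μ r) = μ^{2ℓ} V*_L(r)`. Hence the substitution `r ↦ μ r` maps the turning
points of `(E, L)` onto those of `(μ^{2ℓ} E, μ^{ℓ+1} L)`, the integrand picks up the factor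
`√(μ^{2ℓ}) = μ^ℓ` and the measure the factor `μ`, so the radial action gets multiplied by
`μ^{ℓ+1} = λ`.
-/

open Real

noncomputable section

/-- The effective potential `V*_L(r) = L²/(2r²) + r^{2ℓ}/(2ℓ)`. -/
noncomputable def Veff (ℓ : ℕ) (L r : ℝ) : ℝ :=
  L ^ 2 / (2 * r ^ 2) + r ^ (2 * ℓ) / (2 * (ℓ : ℝ))

/-- The domain `D* = {(E,L) : E > 0, 0 < |L| < (2ℓE/(ℓ+1))^{(ℓ+1)/(2ℓ)}}`. -/
def Dstar (ℓ : ℕ) : Set (ℝ × ℝ) :=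
  {q | 0 < q.1 ∧ 0 < |q.2| ∧
    |q.2| < (2 * (ℓ : ℝ) * q.1 / ((ℓ : ℝ) + 1)) ^ (((ℓ : ℝ) + 1) / (2 * (ℓ : ℝ)))}

/-- The radial action `a_r(E,L) = (√2/π) ∫_{r_m}^{r_M} √(E − V*_L(r)) dr`. -/
noncomputable def aR (ℓ : ℕ) (rm rM : ℝ → ℝ → ℝ) (E L : ℝ) : ℝ :=
  (Real.sqrt 2 / π) * ∫ r in rm E L..rM E L, Real.sqrt (E - Veff ℓ L r)

def IsTurningRadii (ℓ : ℕ) (rm rM : ℝ → ℝ → ℝ) : Prop :=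
  ∀ E L : ℝ, (E, L) ∈ Dstar ℓ →
    0 < rm E L ∧ rm E L < rM E L ∧
    Veff ℓ L (rm E L) = E ∧ Veff ℓ L (rM E L) = E ∧
    ∀ r : ℝ, 0 < r → Veff ℓ L r = E → r = rm E L ∨ r = rM E L

lemma eq_and_eq_of_lt_of_mem_pair {α : Type*} [Preorder α] {a b x y : α} (hab : a ≤ b)
    (hxy : x < y) (hx : x = a ∨ x = b) (hy : y = a ∨ y = b) : x = a ∧ y = b := by
  rcases hx with rfl | rfl <;> rcases hy with rfl | rfl
  · exact absurd hxy (lt_irrefl _)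
  · exact ⟨rfl, rfl⟩
  · exact absurd hxy (not_lt_of_ge hab)
  · exact absurd hxy (lt_irrefl _)

section Scaling

variable {ℓ : ℕ} {μ : ℝ}

lemma Veff_mul_mul (hμ : μ ≠ 0) (L r : ℝ) :
    Veff ℓ (μ ^ (ℓ + 1) * L) (μ * r) = μ ^ (2 * ℓ) * Veff ℓ L r := by
  have hμ2 : μ ^ 2 ≠ 0 := pow_ne_zero 2 hμ
  unfold Veff
  field_simp
  ring

lemma pow_two_mul_rpow_succ_div (hℓ : ℓ ≠ 0) {c : ℝ} (hc : 0 ≤ c) :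
    (c ^ (2 * ℓ)) ^ (((ℓ : ℝ) + 1) / (2 * (ℓ : ℝ))) = c ^ (ℓ + 1) := by
  rw [← Real.rpow_natCast, ← Real.rpow_mul hc, ← Real.rpow_natCast]
  congr 1
  have : (ℓ : ℝ) ≠ 0 := by exact_mod_cast hℓ
  push_cast
  field_simp

lemma mem_Dstar_scale (hℓ : ℓ ≠ 0) (hμ : 0 < μ) {E L : ℝ} (h : (E, L) ∈ Dstar ℓ) :
    (μ ^ (2 * ℓ) * E, μ ^ (ℓ + 1) * L) ∈ Dstar ℓ := by
  obtain ⟨hE, hL, hLlt⟩ := h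
  have hμℓ : 0 < μ ^ (ℓ + 1) := pow_pos hμ _
  refine ⟨by positivity, ?_, ?_⟩
  · rw [abs_mul, abs_of_pos hμℓ]
    exact mul_pos hμℓ hL
  · set p : ℝ := ((ℓ : ℝ) + 1) / (2 * ℓ)
    calc |μ ^ (ℓ + 1) * L| = μ ^ (ℓ + 1) * |L| := by rw [abs_mul, abs_of_pos hμℓ]
      _ < μ ^ (ℓ + 1) * (2 * ℓ * E / (ℓ + 1)) ^ p := mul_lt_mul_of_pos_left hLlt hμℓ
      _ = (μ ^ (2 * ℓ) * (2 * ℓ * E / (ℓ + 1))) ^ p := by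
        rw [Real.mul_rpow (by positivity) (by positivity), pow_two_mul_rpow_succ_div hℓ hμ.le]
      _ = (2 * ℓ * (μ ^ (2 * ℓ) * E) / (ℓ + 1)) ^ p := by ring_nf

lemma integral_sqrt_sub_Veff_mul (hμ : 0 < μ) (E L a b : ℝ) :
    ∫ r in μ * a..μ * b, √(μ ^ (2 * ℓ) * E - Veff ℓ (μ ^ (ℓ + 1) * L) r)
      = μ ^ (ℓ + 1) * ∫ r in a..b, √(E - Veff ℓ L r) := by
  have hsqrt : ∀ s, √(μ ^ (2 * ℓ) * E - Veff ℓ (μ ^ (ℓ + 1) * L) (μ * s))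
      = μ ^ ℓ * √(E - Veff ℓ L s) := fun s => by
    rw [Veff_mul_mul hμ.ne', ← mul_sub, Real.sqrt_mul (by positivity), pow_mul',
      Real.sqrt_sq (by positivity)]
  rw [← intervalIntegral.smul_integral_comp_mul_left, smul_eq_mul]
  simp only [hsqrt, intervalIntegral.integral_const_mul]
  ring

variable {rm rM : ℝ → ℝ → ℝ}

lemma IsTurningRadii.scale (h : IsTurningRadii ℓ rm rM) (hℓ : ℓ ≠ 0) (hμ : 0 < μ)
    {E L : ℝ} (hEL : (E, L) ∈ Dstar ℓ) :
    μ * rm E L = rm (μ ^ (2 * ℓ) * E) (μ ^ (ℓ + 1) * L) ∧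
      μ * rM E L = rM (μ ^ (2 * ℓ) * E) (μ ^ (ℓ + 1) * L) := by
  obtain ⟨hrm, hlt, hVm, hVM, -⟩ := h E L hEL
  obtain ⟨-, hlt', -, -, hroot'⟩ := h _ _ (mem_Dstar_scale hℓ hμ hEL)
  refine eq_and_eq_of_lt_of_mem_pair hlt'.le (mul_lt_mul_of_pos_left hlt hμ) ?_ ?_
  · exact hroot' _ (mul_pos hμ hrm) (by rw [Veff_mul_mul hμ.ne', hVm])
  · exact hroot' _ (mul_pos hμ (hrm.trans hlt)) (by rw [Veff_mul_mul hμ.ne', hVM])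

lemma IsTurningRadii.aR_scale (h : IsTurningRadii ℓ rm rM) (hℓ : ℓ ≠ 0) (hμ : 0 < μ)
    {E L : ℝ} (hEL : (E, L) ∈ Dstar ℓ) :
    aR ℓ rm rM (μ ^ (2 * ℓ) * E) (μ ^ (ℓ + 1) * L) = μ ^ (ℓ + 1) * aR ℓ rm rM E L := by
  obtain ⟨hm, hM⟩ := h.scale hℓ hμ hEL
  rw [aR, aR, ← hm, ← hM, integral_sqrt_sub_Veff_mul hμ]
  ring

end Scaling

theorem stmt5 (ℓ : ℕ) (hℓ : 2 ≤ ℓ) (rm rM : ℝ → ℝ → ℝ)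
    (hroots : ∀ E L : ℝ, (E, L) ∈ Dstar ℓ →
      0 < rm E L ∧ rm E L < rM E L ∧
      Veff ℓ L (rm E L) = E ∧ Veff ℓ L (rM E L) = E ∧
      ∀ r : ℝ, 0 < r → Veff ℓ L r = E → r = rm E L ∨ r = rM E L) :
    ∀ E L : ℝ, (E, L) ∈ Dstar ℓ → ∀ lam : ℝ, 0 < lam →
      (lam ^ (2 * (ℓ : ℝ) / ((ℓ : ℝ) + 1)) * E, lam * L) ∈ Dstar ℓ ∧
      aR ℓ rm rM (lam ^ (2 * (ℓ : ℝ) / ((ℓ : ℝ) + 1)) * E) (lam * L)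
        = lam * aR ℓ rm rM E L := by
  intro E L hEL lam hlam
  have hℓ0 : ℓ ≠ 0 := by omega
  set μ := lam ^ (1 / ((ℓ : ℝ) + 1))
  have hμ : 0 < μ := Real.rpow_pos_of_pos hlam _
  have hμ_pow : ∀ n : ℕ, μ ^ n = lam ^ ((n : ℝ) / ((ℓ : ℝ) + 1)) := fun n => by
    rw [← Real.rpow_natCast, ← Real.rpow_mul hlam.le, one_div_mul_eq_div]
  have hlam_eq : lam = μ ^ (ℓ + 1) := by
    rw [hμ_pow, Nat.cast_succ, div_self (by positivity), Real.rpow_one]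
  have hE_eq : lam ^ (2 * (ℓ : ℝ) / ((ℓ : ℝ) + 1)) = μ ^ (2 * ℓ) := by
    rw [hμ_pow, Nat.cast_mul, Nat.cast_ofNat]
  rw [hE_eq, hlam_eq]
  exact ⟨mem_Dstar_scale hℓ0 hμ hEL, IsTurningRadii.aR_scale hroots hℓ0 hμ hEL⟩
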